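/- Let B, C, D, K, P, Q be positive real numbers with C ≤ 1 and C P K / D < 1. If 8 B C^2 Q K^2 > (9D - CPK)√((D - CPK)(9D - CPK)) + 27 D^2 - 18 D C P K - C^2 P^2 K^2, then there exist exactly two pairs (U, V) with U > 0, V > 0 satisfying B U (1 - U/K) = P U V + Q U V^2 and C(P U V + Q U V^2) = D V, and these two equilibria (U_+, V_+), (U_-, V_-) satisfy U_+ < U_- < K. -/

import Mathlib

/-!
Eliminating `V` through `C U (P + Q V) = D` turns the positive equilibria into the roots in
`(0, 1)` of the cubic `p(u) = a u² (1 - u) - D (D - y u)`, where `u = U / K`, `a = B C² Q K²`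
and `y = C P K`. Since `p(0) < 0` and `p(1) < 0` when `y < D`, there are two such roots as soon
as `p` is positive somewhere in between, i.e. as soon as `a` exceeds the minimum over `(0, 1)` of
`D (D - y u) / (u² (1 - u))`. This minimum is attained at the smaller root `u₀` of
`2 y u² - (3 D + y) u + 2 D`, and eight times its value is the right-hand side of the
hypothesis. The sum of the three roots of `p` is `1` and their product `-D² / a` is negative, so
the third root is negative and there are no other positive equilibria.
-/

lemma three_mul_sub_lt_sqrt_lt {D y : ℝ} (hy : 0 < y) (hyD : y < D) :
    3 * (D - y) < √((D - y) * (9 * D - y)) ∧ √((D - y) * (9 * D - y)) < 3 * D := by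
  have hsq := Real.sq_sqrt (by nlinarith : 0 ≤ (D - y) * (9 * D - y))
  have hnn := Real.sqrt_nonneg ((D - y) * (9 * D - y))
  constructor <;> nlinarith

def equilibriumCubic (a D y u : ℝ) : ℝ := a * u ^ 2 * (1 - u) - D * (D - y * u)

namespace equilibriumCubic

variable {a D y : ℝ}

lemma factor {u₁ u₂ : ℝ} (h₁ : equilibriumCubic a D y u₁ = 0)
    (h₂ : equilibriumCubic a D y u₂ = 0) (hne : u₁ ≠ u₂) (u : ℝ) :
    equilibriumCubic a D y u = -a * (u - u₁) * (u - u₂) * (u - (1 - u₁ - u₂)) := by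
  unfold equilibriumCubic at *
  set α := D * y + a * (u₁ * u₂ + (u₁ + u₂) * (1 - u₁ - u₂))
  set β := -D ^ 2 - a * u₁ * u₂ * (1 - u₁ - u₂)
  have hα : α = 0 := by
    have : α * (u₁ - u₂) = 0 := by linear_combination h₁ - h₂
    exact (mul_eq_zero.mp this).resolve_right (sub_ne_zero.mpr hne)
  have hβ : β = 0 := by linear_combination h₁ - u₁ * hα
  linear_combination u * hα + hβ

lemma eq_or_eq_of_eq_zero (ha : 0 < a) (hD : D ≠ 0) {u₁ u₂ u : ℝ} (hu₁ : 0 < u₁)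
    (hu₂ : 0 < u₂) (hne : u₁ ≠ u₂) (h₁ : equilibriumCubic a D y u₁ = 0)
    (h₂ : equilibriumCubic a D y u₂ = 0) (hu : 0 < u) (h : equilibriumCubic a D y u = 0) :
    u = u₁ ∨ u = u₂ := by
  have hfactor := factor h₁ h₂ hne
  have hthird : a * u₁ * u₂ * (1 - u₁ - u₂) = -D ^ 2 := by
    have := hfactor 0
    unfold equilibriumCubic at this
    linear_combination -this
  have hthird_neg : 1 - u₁ - u₂ < 0 := by
    by_contra! hnn
    have : 0 ≤ a * u₁ * u₂ * (1 - u₁ - u₂) := by positivity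
    nlinarith [sq_pos_of_ne_zero hD]
  rw [hfactor u] at h
  simp only [mul_eq_zero, neg_eq_zero, sub_eq_zero] at h
  rcases h with ((ha0 | rfl) | rfl) | rfl
  · exact absurd ha0 ha.ne'
  · exact .inl rfl
  · exact .inr rfl
  · linarith

/-- At `u₀ = (3 D + y - T) / (4 y)` one has `D - y u₀ = (D - y + T) / 4` and
`u₀² (1 - u₀) = (3 D + y - T)² (T - 3 (D - y)) / (64 y³)`, so this says that
`8 D (D - y u₀) / (u₀² (1 - u₀))` is the left factor. -/
lemma critical_value_identity {T : ℝ} (hT : T ^ 2 = (D - y) * (9 * D - y)) :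
    ((9 * D - y) * T + 27 * D ^ 2 - 18 * D * y - y ^ 2) * (3 * D + y - T) ^ 2 *
      (T - 3 * (D - y)) = 128 * D * y ^ 3 * (D - y + T) := by
  linear_combination ((9 * D - y) * T ^ 2 - (54 * D ^ 2 + 2 * y ^ 2) * T
    + 81 * D ^ 3 + 9 * D ^ 2 * y - 29 * D * y ^ 2 + 3 * y ^ 3) * hT

lemma sub_pos_of_eq_zero (ha : 0 < a) (hD : 0 < D) {u : ℝ} (hu : 0 < u) (hu1 : u < 1)
    (h : equilibriumCubic a D y u = 0) : 0 < D - y * u := by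
  have : 0 < D * (D - y * u) := by
    unfold equilibriumCubic at h
    have : 0 < a * u ^ 2 * (1 - u) := by have := sub_pos.mpr hu1; positivity
    linarith
  exact pos_of_mul_pos_right this hD.le

lemma exists_two_roots (hy : 0 < y) (hyD : y < D)
    (hcond : (9 * D - y) * √((D - y) * (9 * D - y)) + 27 * D ^ 2 - 18 * D * y - y ^ 2 < 8 * a) :
    ∃ u₁ u₂, 0 < u₁ ∧ u₁ < u₂ ∧ u₂ < 1 ∧
      equilibriumCubic a D y u₁ = 0 ∧ equilibriumCubic a D y u₂ = 0 := by
  set T := √((D - y) * (9 * D - y))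
  obtain ⟨hT_lo, hT_hi⟩ := three_mul_sub_lt_sqrt_lt hy hyD
  have hT : T ^ 2 = (D - y) * (9 * D - y) := Real.sq_sqrt (by nlinarith)
  set u₀ := (3 * D + y - T) / (4 * y)
  have hu₀_pos : 0 < u₀ := by apply div_pos <;> linarith
  have hu₀_lt : u₀ < 1 := by rw [div_lt_one (by positivity)]; linarith
  have hp₀ : equilibriumCubic a D y 0 < 0 := by
    simp only [equilibriumCubic]; nlinarith
  have hp₁ : equilibriumCubic a D y 1 < 0 := by
    simp only [equilibriumCubic]; nlinarith
  have hpu₀ : 0 < equilibriumCubic a D y u₀ := by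
    have key : 512 * y ^ 3 * equilibriumCubic a D y u₀ =
        (8 * a - ((9 * D - y) * T + 27 * D ^ 2 - 18 * D * y - y ^ 2)) *
          (3 * D + y - T) ^ 2 * (T - 3 * (D - y)) := by
      simp only [equilibriumCubic, u₀]
      field_simp
      linear_combination 64 * critical_value_identity hT
    have : 0 < 512 * y ^ 3 * equilibriumCubic a D y u₀ := by
      rw [key]
      apply mul_pos (mul_pos (by linarith) (pow_pos (by linarith) 2)) (by linarith)
    exact pos_of_mul_pos_right this (by positivity)
  have hcont : Continuous (equilibriumCubic a D y) := by
    unfold equilibriumCubic; fun_prop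
  obtain ⟨u₁, ⟨hu₁_pos, hu₁_lt⟩, h₁⟩ :=
    intermediate_value_Ioo hu₀_pos.le hcont.continuousOn ⟨hp₀, hpu₀⟩
  obtain ⟨u₂, ⟨hu₂_gt, hu₂_lt⟩, h₂⟩ :=
    intermediate_value_Ioo' hu₀_lt.le hcont.continuousOn ⟨hp₁, hpu₀⟩
  exact ⟨u₁, u₂, hu₁_pos, hu₁_lt.trans hu₂_gt, hu₂_lt, h₁, h₂⟩

end equilibriumCubic

def IsPositiveEquilibrium (B C D K P Q U V : ℝ) : Prop :=
  0 < U ∧ 0 < V ∧ B * U * (1 - U / K) = P * U * V + Q * U * V ^ 2 ∧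
    C * (P * U * V + Q * U * V ^ 2) = D * V

lemma isPositiveEquilibrium_iff {B C D K P Q : ℝ} (hB : 0 < B) (hC : 0 < C) (hD : 0 < D)
    (hK : 0 < K) (hP : 0 < P) (hQ : 0 < Q) (U V : ℝ) :
    IsPositiveEquilibrium B C D K P Q U V ↔ 0 < U ∧ U < K ∧
      equilibriumCubic (B * C ^ 2 * Q * K ^ 2) D (C * P * K) (U / K) = 0 ∧
      V = (D - C * P * U) / (C * Q * U) := by
  constructor
  · rintro ⟨hU, hV, h₁, h₂⟩
    have hrate : C * U * (P + Q * V) = D := mul_right_cancel₀ hV.ne' (by linear_combination h₂)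
    have hUK : U < K := by
      have : 0 < B * U * (1 - U / K) := by rw [h₁]; positivity
      have := pos_of_mul_pos_right this (by positivity)
      rwa [sub_pos, div_lt_one hK] at this
    refine ⟨hU, hUK, ?_, ?_⟩
    · unfold equilibriumCubic
      field_simp
      field_simp at h₁
      linear_combination C ^ 2 * Q * U ^ 2 * h₁ + K * (D + C * U * Q * V) * hrate
    · rw [eq_div_iff (by positivity)]
      linear_combination hrate
  · rintro ⟨hU, hUK, hp, rfl⟩
    have hu : 0 < U / K := div_pos hU hK
    have hu1 : U / K < 1 := (div_lt_one hK).mpr hUK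
    have hV : 0 < D - C * P * U := by
      convert equilibriumCubic.sub_pos_of_eq_zero (by positivity) hD hu hu1 hp using 2
      field_simp
    refine ⟨hU, div_pos hV (by positivity), ?_, ?_⟩
    · unfold equilibriumCubic at hp
      field_simp at hp ⊢
      linear_combination hp
    · field_simp
      ring

theorem two_positive_equilibria_nonscaled_general (B C D K P Q : ℝ)
    (hB : 0 < B) (hC : 0 < C) (hD : 0 < D) (hK : 0 < K) (hP : 0 < P) (hQ : 0 < Q)
    (hR0 : C * P * K / D < 1)
    (hcond : (9 * D - C * P * K) * Real.sqrt ((D - C * P * K) * (9 * D - C * P * K)) +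
        27 * D ^ 2 - 18 * D * C * P * K - C ^ 2 * P ^ 2 * K ^ 2 <
      8 * B * C ^ 2 * Q * K ^ 2) :
    ∃ Up Vp Um Vm : ℝ,
      (0 < Up ∧ 0 < Vp ∧
        B * Up * (1 - Up / K) = P * Up * Vp + Q * Up * Vp ^ 2 ∧
        C * (P * Up * Vp + Q * Up * Vp ^ 2) = D * Vp) ∧
      (0 < Um ∧ 0 < Vm ∧
        B * Um * (1 - Um / K) = P * Um * Vm + Q * Um * Vm ^ 2 ∧
        C * (P * Um * Vm + Q * Um * Vm ^ 2) = D * Vm) ∧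
      Up < Um ∧ Um < K ∧
      ∀ U V : ℝ, 0 < U → 0 < V →
        B * U * (1 - U / K) = P * U * V + Q * U * V ^ 2 →
        C * (P * U * V + Q * U * V ^ 2) = D * V →
        (U, V) = (Up, Vp) ∨ (U, V) = (Um, Vm) := by
  have hequil := isPositiveEquilibrium_iff hB hC hD hK hP hQ
  obtain ⟨u₁, u₂, hu₁, hu₁₂, hu₂, h₁, h₂⟩ :=
    equilibriumCubic.exists_two_roots (a := B * C ^ 2 * Q * K ^ 2) (by positivity)
      ((div_lt_one hD).mp hR0) (by linarith)
  have hroot : ∀ {u}, 0 < u → u < 1 →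
      equilibriumCubic (B * C ^ 2 * Q * K ^ 2) D (C * P * K) u = 0 →
      IsPositiveEquilibrium B C D K P Q (K * u) ((D - C * P * (K * u)) / (C * Q * (K * u))) :=
    fun hu hu1 hp ↦ (hequil _ _).2 ⟨by positivity, mul_lt_of_lt_one_right hK hu1,
      by rwa [mul_div_cancel_left₀ _ hK.ne'], rfl⟩
  refine ⟨_, _, _, _, hroot hu₁ (hu₁₂.trans hu₂) h₁, hroot (hu₁.trans hu₁₂) hu₂ h₂,
    mul_lt_mul_of_pos_left hu₁₂ hK, mul_lt_of_lt_one_right hK hu₂, fun U V hU hV e₁ e₂ ↦ ?_⟩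
  obtain ⟨-, -, hp, rfl⟩ := (hequil U V).1 ⟨hU, hV, e₁, e₂⟩
  have hUu : U = K * (U / K) := (mul_div_cancel₀ U hK.ne').symm
  rcases equilibriumCubic.eq_or_eq_of_eq_zero (by positivity) hD.ne' hu₁ (hu₁.trans hu₁₂)
    hu₁₂.ne h₁ h₂ (div_pos hU hK) hp with h | h
  · left; rw [hUu, h]
  · right; rw [hUu, h]

/-- For positive `B, C, D, K, P, Q` with `C ≤ 1` and `CPK/D < 1`,
if `8BC²QK² > (9D - CPK)√((D-CPK)(9D-CPK)) + 27D² - 18DCPK - C²P²K²`, then the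
non-scaled system has exactly two positive equilibria `(U₊, V₊), (U₋, V₋)`,
with `U₊ < U₋ < K`. -/
theorem two_positive_equilibria_nonscaled (B C D K P Q : ℝ)
    (hB : 0 < B) (hC : 0 < C) (hD : 0 < D) (hK : 0 < K) (hP : 0 < P) (hQ : 0 < Q)
    (hC1 : C ≤ 1) (hR0 : C * P * K / D < 1)
    (hcond : (9 * D - C * P * K) * Real.sqrt ((D - C * P * K) * (9 * D - C * P * K)) +
        27 * D ^ 2 - 18 * D * C * P * K - C ^ 2 * P ^ 2 * K ^ 2 <
      8 * B * C ^ 2 * Q * K ^ 2) :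
    ∃ Up Vp Um Vm : ℝ,
      (0 < Up ∧ 0 < Vp ∧
        B * Up * (1 - Up / K) = P * Up * Vp + Q * Up * Vp ^ 2 ∧
        C * (P * Up * Vp + Q * Up * Vp ^ 2) = D * Vp) ∧
      (0 < Um ∧ 0 < Vm ∧
        B * Um * (1 - Um / K) = P * Um * Vm + Q * Um * Vm ^ 2 ∧
        C * (P * Um * Vm + Q * Um * Vm ^ 2) = D * Vm) ∧
      Up < Um ∧ Um < K ∧
      ∀ U V : ℝ, 0 < U → 0 < V →
        B * U * (1 - U / K) = P * U * V + Q * U * V ^ 2 →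
        C * (P * U * V + Q * U * V ^ 2) = D * V →
        (U, V) = (Up, Vp) ∨ (U, V) = (Um, Vm) :=
  two_positive_equilibria_nonscaled_general B C D K P Q hB hC hD hK hP hQ hR0 hcond
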